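/- arXiv:1907.02551 — 6 statements merged into one kernel-verified Lean document; each statement's English description precedes it below -/
import Mathlib

section
/- Let p be any probability distribution on X × Y × Z for finite types X, Y, Z, with Z-marginal p_Z. For every real q ≠ 1 the conditional Tsallis mutual information decomposes as I_q(X:Y|Z) = ∑_{z with p_Z(z)>0} p_Z(z)^q · I_q(X:Y)_{p^{(z)}}, where p^{(z)} is the conditional distribution on X × Y given Z = z, defined by p^{(z)}(x,y) = p(x,y,z)/p_Z(z). -/
/-!
Tsallis entropy is an affine function of the power sum `∑ p(x)^q` over the support. The power
sum of a joint distribution on `A × Z` is the sum over `z` of the power sums of its slices, and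
dividing the slice at `z` by `p_Z(z)` divides its power sum by `p_Z(z)^q`. Weighted by
`p_Z(z)^q`, the conditional mutual information thus becomes a sum of slice power sums, which
regroup into the power sums of the `XZ`, `YZ`, `XYZ` and `Z` marginals; the affine constants
cancel between the four entropies.
-/

open Finset

/-- Tsallis entropy of order `q` of a distribution `p` on a finite type,
with the sum restricted to the support of `p`. -/
noncomputable def tsallisEnt {α : Type*} [Fintype α] (q : ℝ) (p : α → ℝ) : ℝ :=
  (1 / (1 - q)) * ((∑ x ∈ univ.filter (fun x => 0 < p x), p x ^ q) - 1)

noncomputable def supportPowSum {α : Type*} [Fintype α] (q : ℝ) (p : α → ℝ) : ℝ :=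
  ∑ x ∈ univ.filter (fun x => 0 < p x), p x ^ q

section

variable {α β Z : Type*} [Fintype α] [Fintype β] [Fintype Z] (q : ℝ)

theorem tsallisEnt_eq_supportPowSum (p : α → ℝ) :
    tsallisEnt q p = (1 - q)⁻¹ * (supportPowSum q p - 1) := by
  rw [tsallisEnt, supportPowSum, one_div]

theorem supportPowSum_comp_equiv (p : α → ℝ) (e : β ≃ α) :
    supportPowSum q (p ∘ e) = supportPowSum q p := by
  simp only [supportPowSum, sum_filter]
  exact e.sum_comp (fun x => if 0 < p x then p x ^ q else 0)

theorem supportPowSum_prod_of_vanishing (f : α × Z → ℝ) (S : Finset Z)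
    (hS : ∀ z ∉ S, ∀ a, f (a, z) = 0) :
    supportPowSum q f = ∑ z ∈ S, supportPowSum q (fun a => f (a, z)) := by
  simp only [supportPowSum, sum_filter]
  rw [Fintype.sum_prod_type, sum_comm]
  refine (sum_subset (subset_univ S) fun z _ hz => ?_).symm
  simp [hS z hz]

theorem supportPowSum_div (g : α → ℝ) {s : ℝ} (hs : 0 < s) :
    supportPowSum q (fun a => g a / s) = supportPowSum q g / s ^ q := by
  have hsupp : univ.filter (fun a => 0 < g a / s) = univ.filter (fun a => 0 < g a) :=
    filter_congr fun a _ => div_pos_iff_of_pos_right hs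
  rw [supportPowSum, supportPowSum, hsupp, sum_div]
  exact sum_congr rfl fun a ha => Real.div_rpow (mem_filter.mp ha).2.le hs.le q

theorem rpow_mul_tsallisEnt_div (g : α → ℝ) {s : ℝ} (hs : 0 < s) :
    s ^ q * tsallisEnt q (fun a => g a / s) = (1 - q)⁻¹ * (supportPowSum q g - s ^ q) := by
  have hsq : s ^ q ≠ 0 := (Real.rpow_pos_of_pos hs q).ne'
  rw [tsallisEnt_eq_supportPowSum, supportPowSum_div q g hs]
  field_simp

theorem rpow_mul_tsallisMutualInfo_div (f : α → β → ℝ) {s : ℝ} (hs : 0 < s) :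
    s ^ q * (tsallisEnt q (fun a => ∑ b, f a b / s) + tsallisEnt q (fun b => ∑ a, f a b / s)
        - tsallisEnt q (fun w : α × β => f w.1 w.2 / s))
      = (1 - q)⁻¹ * (supportPowSum q (fun a => ∑ b, f a b)
          + supportPowSum q (fun b => ∑ a, f a b)
          - supportPowSum q (fun w : α × β => f w.1 w.2) - s ^ q) := by
  simp only [← sum_div]
  rw [mul_sub, mul_add, rpow_mul_tsallisEnt_div q _ hs, rpow_mul_tsallisEnt_div q _ hs,
    rpow_mul_tsallisEnt_div q _ hs]
  ring

end

theorem tsallis_cond_mutual_info_decomposition_general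
    {X Y Z : Type*} [Fintype X] [Fintype Y] [Fintype Z]
    (p : X × Y × Z → ℝ) (hp0 : ∀ t, 0 ≤ p t)
    (q : ℝ) :
    tsallisEnt q (fun w : X × Z => ∑ y, p (w.1, y, w.2))
        + tsallisEnt q (fun w : Y × Z => ∑ x, p (x, w.1, w.2))
        - tsallisEnt q (fun z => ∑ x, ∑ y, p (x, y, z))
        - tsallisEnt q p
      = ∑ z ∈ univ.filter (fun z => 0 < ∑ x, ∑ y, p (x, y, z)),
          (∑ x, ∑ y, p (x, y, z)) ^ q *
            (tsallisEnt q (fun x => ∑ y, p (x, y, z) / (∑ x', ∑ y', p (x', y', z)))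
              + tsallisEnt q (fun y => ∑ x, p (x, y, z) / (∑ x', ∑ y', p (x', y', z)))
              - tsallisEnt q (fun w : X × Y =>
                  p (w.1, w.2, z) / (∑ x', ∑ y', p (x', y', z)))) := by
  set S := univ.filter (fun z => 0 < ∑ x, ∑ y, p (x, y, z))
  have hvanish : ∀ z ∉ S, ∀ x y, p (x, y, z) = 0 := by
    intro z hz x y
    have hzero : ∑ x, ∑ y, p (x, y, z) = 0 :=
      le_antisymm (by simpa [S] using hz) (sum_nonneg fun x _ => sum_nonneg fun y _ => hp0 _)
    rw [sum_eq_zero_iff_of_nonneg fun x _ => sum_nonneg fun y _ => hp0 _] at hzero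
    exact (sum_eq_zero_iff_of_nonneg fun y _ => hp0 _).mp (hzero x (mem_univ x)) y (mem_univ y)
  have hXZ := supportPowSum_prod_of_vanishing q (fun w : X × Z => ∑ y, p (w.1, y, w.2)) S
    fun z hz x => by simp [hvanish z hz]
  have hYZ := supportPowSum_prod_of_vanishing q (fun w : Y × Z => ∑ x, p (x, w.1, w.2)) S
    fun z hz y => by simp [hvanish z hz]
  have hXYZ : supportPowSum q p = ∑ z ∈ S, supportPowSum q (fun w : X × Y => p (w.1, w.2, z)) := by
    rw [← supportPowSum_comp_equiv q p (Equiv.prodAssoc X Y Z)]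
    exact supportPowSum_prod_of_vanishing q _ S fun z hz w => hvanish z hz w.1 w.2
  have hZ : supportPowSum q (fun z => ∑ x, ∑ y, p (x, y, z)) = ∑ z ∈ S, (∑ x, ∑ y, p (x, y, z)) ^ q :=
    rfl
  rw [sum_congr rfl fun z hz =>
    rpow_mul_tsallisMutualInfo_div q (fun x y => p (x, y, z)) (mem_filter.mp hz).2, ← mul_sum]
  simp only [tsallisEnt_eq_supportPowSum, hXZ, hYZ, hXYZ, hZ, sum_add_distrib, sum_sub_distrib]
  ring

/-- For any probability distribution `p` on `X × Y × Z` and real `q ≠ 1`, the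
conditional Tsallis mutual information `I_q(X:Y|Z) = S_q(XZ)+S_q(YZ)−S_q(Z)−S_q(XYZ)`
decomposes as `∑_{z : p_Z(z)>0} p_Z(z)^q · I_q(X:Y)` evaluated on the conditional
distribution `p^{(z)}(x,y) = p(x,y,z)/p_Z(z)`. -/
theorem tsallis_cond_mutual_info_decomposition
    {X Y Z : Type*} [Fintype X] [Fintype Y] [Fintype Z]
    (p : X × Y × Z → ℝ) (hp0 : ∀ t, 0 ≤ p t) (hp1 : ∑ t, p t = 1)
    (q : ℝ) (hq1 : q ≠ 1) :
    tsallisEnt q (fun w : X × Z => ∑ y, p (w.1, y, w.2))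
        + tsallisEnt q (fun w : Y × Z => ∑ x, p (x, w.1, w.2))
        - tsallisEnt q (fun z => ∑ x, ∑ y, p (x, y, z))
        - tsallisEnt q p
      = ∑ z ∈ univ.filter (fun z => 0 < ∑ x, ∑ y, p (x, y, z)),
          (∑ x, ∑ y, p (x, y, z)) ^ q *
            (tsallisEnt q (fun x => ∑ y, p (x, y, z) / (∑ x', ∑ y', p (x', y', z)))
              + tsallisEnt q (fun y => ∑ x, p (x, y, z) / (∑ x', ∑ y', p (x', y', z)))
              - tsallisEnt q (fun w : X × Y =>
                  p (w.1, w.2, z) / (∑ x', ∑ y', p (x', y', z)))) :=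
  tsallis_cond_mutual_info_decomposition_general p hp0 q
end

section
/- Let X, Y, Z be finite types of cardinalities d_X, d_Y, d_Z ≥ 1 and let p be a probability distribution on X × Y × Z satisfying the conditional independence p(x,y,z)·p_Z(z) = p_{XZ}(x,z)·p_{YZ}(y,z) for all x, y, z (where p_Z, p_{XZ}, p_{YZ} are the indicated marginals). Then for every real q > 1 the conditional Tsallis mutual information satisfies I_q(X:Y|Z) ≤ f(q,d_X,d_Y), where f(q,d_X,d_Y) = (1/(q−1))·(1−d_X^{1−q})·(1−d_Y^{1−q}). -/
/-! Given `Z = z`, the variables `X` and `Y` are independent, so by the pseudo-additivity of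
Tsallis entropy the slice `z` contributes `p_Z(z)^q (1 - ∑ u^q)(1 - ∑ v^q)` to
`(q - 1) I_q(X:Y|Z)`, where `u`, `v` are the conditional laws of `X` and `Y`. For `q ≥ 1` the power
sum `∑ u^q` of a law on `d` points lies between its value `d^{1-q}` at the uniform law
(power-mean inequality) and `1`, and `∑_z p_Z(z)^q ≤ 1`. -/

open Finset

/-- The bound `f(q,a,b) = (1/(q−1))·(1−a^{1−q})·(1−b^{1−q})`. -/
noncomputable def fBound (q : ℝ) (a b : ℕ) : ℝ :=
  (1 / (q - 1)) * (1 - (a : ℝ) ^ (1 - q)) * (1 - (b : ℝ) ^ (1 - q))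

section PowerSums

variable {ι : Type*} {s : Finset ι} {f : ι → ℝ} {p : ℝ}

theorem sum_rpow_le_rpow_sum (hp : 1 ≤ p) (hf : ∀ i ∈ s, 0 ≤ f i) :
    ∑ i ∈ s, f i ^ p ≤ (∑ i ∈ s, f i) ^ p := by
  classical
  induction s using Finset.induction_on with
  | empty => simp [Real.zero_rpow (by linarith : p ≠ 0)]
  | insert a s ha ih =>
    have hs : ∀ i ∈ s, 0 ≤ f i := fun i hi => hf i (mem_insert_of_mem hi)
    rw [sum_insert ha, sum_insert ha]
    calc f a ^ p + ∑ i ∈ s, f i ^ p ≤ f a ^ p + (∑ i ∈ s, f i) ^ p := by gcongr; exact ih hs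
      _ ≤ (f a + ∑ i ∈ s, f i) ^ p :=
        Real.add_rpow_le_rpow_add (hf a (mem_insert_self a s)) (sum_nonneg hs) hp

theorem card_rpow_mul_rpow_sum_le_sum_rpow (hs : s.Nonempty) (hp : 1 ≤ p)
    (hf : ∀ i ∈ s, 0 ≤ f i) :
    (#s : ℝ) ^ (1 - p) * (∑ i ∈ s, f i) ^ p ≤ ∑ i ∈ s, f i ^ p := by
  have hcard : (0 : ℝ) < #s := by exact_mod_cast hs.card_pos
  calc (#s : ℝ) ^ (1 - p) * (∑ i ∈ s, f i) ^ p
      ≤ (#s : ℝ) ^ (1 - p) * ((#s : ℝ) ^ (p - 1) * ∑ i ∈ s, f i ^ p) := by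
        gcongr; exact Real.rpow_sum_le_const_mul_sum_rpow_of_nonneg s hp hf
    _ = ∑ i ∈ s, f i ^ p := by
        rw [← mul_assoc, ← Real.rpow_add hcard]; simp

end PowerSums

theorem tsallisEnt_eq_of_nonneg {α : Type*} [Fintype α] {q : ℝ} (hq : q ≠ 0) {u : α → ℝ}
    (hu : ∀ x, 0 ≤ u x) :
    tsallisEnt q u = (1 / (1 - q)) * ((∑ x, u x ^ q) - 1) := by
  rw [tsallisEnt, sum_filter_of_ne]
  intro x _ hx
  refine (hu x).lt_of_ne fun h => hx ?_
  rw [← h, Real.zero_rpow hq]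

section MutualInfoDefect

variable {X Y : Type*} [Fintype X] [Fintype Y]

/-- `c^q + ∑ r^q - ∑ₓ (∑ᵧ r)^q - ∑ᵧ (∑ₓ r)^q` for a weight `r` of total mass `c`: for a probability
distribution (`c = 1`) this is `(q - 1) · I_q(X:Y)`. -/
noncomputable def mutualInfoDefect (q : ℝ) (r : X → Y → ℝ) : ℝ :=
  (∑ x, ∑ y, r x y) ^ q + ∑ x, ∑ y, r x y ^ q
    - ∑ x, (∑ y, r x y) ^ q - ∑ y, (∑ x, r x y) ^ q

/-- Homogeneous form of the pseudo-additivity `S_q(X,Y) = S_q(X) + S_q(Y) + (1 - q) S_q(X) S_q(Y)`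
of Tsallis entropy for independent `X`, `Y`. -/
theorem mutualInfoDefect_mul_rpow_eq {q : ℝ} {r : X → Y → ℝ} (hr : ∀ x y, 0 ≤ r x y)
    (hCI : ∀ x y, r x y * ∑ x', ∑ y', r x' y' = (∑ y', r x y') * ∑ x', r x' y) :
    mutualInfoDefect q r * (∑ x, ∑ y, r x y) ^ q
      = ((∑ x, ∑ y, r x y) ^ q - ∑ x, (∑ y, r x y) ^ q)
        * ((∑ x, ∑ y, r x y) ^ q - ∑ y, (∑ x, r x y) ^ q) := by
  have hc : 0 ≤ ∑ x, ∑ y, r x y := sum_nonneg fun x _ => sum_nonneg fun y _ => hr x y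
  have hprod : (∑ x, ∑ y, r x y ^ q) * (∑ x, ∑ y, r x y) ^ q
      = (∑ x, (∑ y, r x y) ^ q) * ∑ y, (∑ x, r x y) ^ q := by
    rw [sum_mul_sum, sum_mul]
    refine sum_congr rfl fun x _ => ?_
    rw [sum_mul]
    refine sum_congr rfl fun y _ => ?_
    rw [← Real.mul_rpow (hr x y) hc, hCI, Real.mul_rpow (sum_nonneg fun _ _ => hr _ _)
      (sum_nonneg fun _ _ => hr _ _)]
  rw [mutualInfoDefect]
  linear_combination hprod

theorem mutualInfoDefect_le [Nonempty X] [Nonempty Y] {q : ℝ} (hq : 1 ≤ q) {r : X → Y → ℝ}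
    (hr : ∀ x y, 0 ≤ r x y)
    (hCI : ∀ x y, r x y * ∑ x', ∑ y', r x' y' = (∑ y', r x y') * ∑ x', r x' y) :
    mutualInfoDefect q r ≤ (∑ x, ∑ y, r x y) ^ q
      * ((1 - (Fintype.card X : ℝ) ^ (1 - q)) * (1 - (Fintype.card Y : ℝ) ^ (1 - q))) := by
  have hc : 0 ≤ ∑ x, ∑ y, r x y := sum_nonneg fun x _ => sum_nonneg fun y _ => hr x y
  have hcq : 0 ≤ (∑ x, ∑ y, r x y) ^ q := Real.rpow_nonneg hc q
  have hrow_le : ∑ x, (∑ y, r x y) ^ q ≤ (∑ x, ∑ y, r x y) ^ q :=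
    sum_rpow_le_rpow_sum hq fun x _ => sum_nonneg fun y _ => hr x y
  have hcol_le : ∑ y, (∑ x, r x y) ^ q ≤ (∑ x, ∑ y, r x y) ^ q := by
    rw [sum_comm (f := fun x y => r x y)]
    exact sum_rpow_le_rpow_sum hq fun y _ => sum_nonneg fun x _ => hr x y
  have hrow_ge : (Fintype.card X : ℝ) ^ (1 - q) * (∑ x, ∑ y, r x y) ^ q
      ≤ ∑ x, (∑ y, r x y) ^ q :=
    card_rpow_mul_rpow_sum_le_sum_rpow univ_nonempty hq fun x _ => sum_nonneg fun y _ => hr x y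
  have hcol_ge : (Fintype.card Y : ℝ) ^ (1 - q) * (∑ x, ∑ y, r x y) ^ q
      ≤ ∑ y, (∑ x, r x y) ^ q := by
    rw [sum_comm (f := fun x y => r x y)]
    exact card_rpow_mul_rpow_sum_le_sum_rpow univ_nonempty hq
      fun y _ => sum_nonneg fun x _ => hr x y
  have hcells_le : ∑ x, ∑ y, r x y ^ q ≤ ∑ x, (∑ y, r x y) ^ q :=
    sum_le_sum fun x _ => sum_rpow_le_rpow_sum hq fun y _ => hr x y
  have hmul := mutualInfoDefect_mul_rpow_eq (q := q) hr hCI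
  rcases hcq.eq_or_lt with hcq0 | hcq_pos
  · have hcol_nonneg : 0 ≤ ∑ y, (∑ x, r x y) ^ q :=
      sum_nonneg fun y _ => Real.rpow_nonneg (sum_nonneg fun x _ => hr x y) q
    rw [← hcq0, zero_mul, mutualInfoDefect]
    linarith
  · refine le_of_mul_le_mul_right ?_ hcq_pos
    rw [hmul]
    nlinarith

end MutualInfoDefect

theorem sum_prod_prod_eq_sum_sum_sum {X Y Z M : Type*} [Fintype X] [Fintype Y] [Fintype Z]
    [AddCommMonoid M] (f : X × Y × Z → M) :
    ∑ t, f t = ∑ z, ∑ x, ∑ y, f (x, y, z) := by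
  rw [Fintype.sum_prod_type_right, Fintype.sum_prod_type_right]
  exact sum_congr rfl fun z _ => sum_comm

theorem tsallis_cond_mutual_info_eq_sum_mutualInfoDefect {X Y Z : Type*} [Fintype X] [Fintype Y]
    [Fintype Z] {p : X × Y × Z → ℝ} (hp : ∀ t, 0 ≤ p t) {q : ℝ} (hq : q ≠ 0) :
    tsallisEnt q (fun w : X × Z => ∑ y, p (w.1, y, w.2))
        + tsallisEnt q (fun w : Y × Z => ∑ x, p (x, w.1, w.2))
        - tsallisEnt q (fun z => ∑ x, ∑ y, p (x, y, z))
        - tsallisEnt q p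
      = (1 / (q - 1)) * ∑ z, mutualInfoDefect q (fun x y => p (x, y, z)) := by
  have hXZ : ∑ w : X × Z, (∑ y, p (w.1, y, w.2)) ^ q = ∑ z, ∑ x, (∑ y, p (x, y, z)) ^ q :=
    Fintype.sum_prod_type_right _
  have hYZ : ∑ w : Y × Z, (∑ x, p (x, w.1, w.2)) ^ q = ∑ z, ∑ y, (∑ x, p (x, y, z)) ^ q :=
    Fintype.sum_prod_type_right _
  rw [tsallisEnt_eq_of_nonneg hq fun _ => sum_nonneg fun _ _ => hp _,
    tsallisEnt_eq_of_nonneg hq fun _ => sum_nonneg fun _ _ => hp _,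
    tsallisEnt_eq_of_nonneg hq fun _ => sum_nonneg fun _ _ => sum_nonneg fun _ _ => hp _,
    tsallisEnt_eq_of_nonneg hq hp, hXZ, hYZ, sum_prod_prod_eq_sum_sum_sum fun t => p t ^ q]
  simp only [mutualInfoDefect, sum_sub_distrib, sum_add_distrib]
  rw [← neg_sub q 1, div_neg]
  ring

theorem tsallis_cond_mutual_info_le_of_cond_indep_general
    {X Y Z : Type*} [Fintype X] [Fintype Y] [Fintype Z]
    (hdX : 1 ≤ Fintype.card X) (hdY : 1 ≤ Fintype.card Y)
    (p : X × Y × Z → ℝ) (hp0 : ∀ t, 0 ≤ p t) (hp1 : ∑ t, p t = 1)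
    (hCI : ∀ x y z, p (x, y, z) * (∑ x', ∑ y', p (x', y', z))
      = (∑ y', p (x, y', z)) * (∑ x', p (x', y, z)))
    (q : ℝ) (hq : 1 < q) :
    tsallisEnt q (fun w : X × Z => ∑ y, p (w.1, y, w.2))
        + tsallisEnt q (fun w : Y × Z => ∑ x, p (x, w.1, w.2))
        - tsallisEnt q (fun z => ∑ x, ∑ y, p (x, y, z))
        - tsallisEnt q p
      ≤ fBound q (Fintype.card X) (Fintype.card Y) := by
  have : Nonempty X := Fintype.card_pos_iff.mp hdX
  have : Nonempty Y := Fintype.card_pos_iff.mp hdY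
  set K := (1 - (Fintype.card X : ℝ) ^ (1 - q)) * (1 - (Fintype.card Y : ℝ) ^ (1 - q))
  have hK : 0 ≤ K := mul_nonneg
    (sub_nonneg.mpr (Real.rpow_le_one_of_one_le_of_nonpos (by exact_mod_cast hdX) (by linarith)))
    (sub_nonneg.mpr (Real.rpow_le_one_of_one_le_of_nonpos (by exact_mod_cast hdY) (by linarith)))
  have hpZ : ∑ z, (∑ x, ∑ y, p (x, y, z)) ^ q ≤ 1 :=
    calc _ ≤ (∑ z, ∑ x, ∑ y, p (x, y, z)) ^ q :=
          sum_rpow_le_rpow_sum hq.le fun z _ => sum_nonneg fun x _ => sum_nonneg fun y _ => hp0 _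
      _ = 1 := by rw [← sum_prod_prod_eq_sum_sum_sum, hp1, Real.one_rpow]
  have hq1 : 0 < q - 1 := by linarith
  rw [tsallis_cond_mutual_info_eq_sum_mutualInfoDefect hp0 (by linarith)]
  calc (1 / (q - 1)) * ∑ z, mutualInfoDefect q (fun x y => p (x, y, z))
      ≤ (1 / (q - 1)) * ∑ z, (∑ x, ∑ y, p (x, y, z)) ^ q * K := by
        gcongr with z
        exact mutualInfoDefect_le hq.le (fun x y => hp0 _) fun x y => hCI x y z
    _ ≤ (1 / (q - 1)) * K := by
        rw [← sum_mul]
        gcongr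
        exact mul_le_of_le_one_left hK hpZ
    _ = fBound q (Fintype.card X) (Fintype.card Y) := by rw [fBound, mul_assoc]

/-- If a distribution `p` on `X × Y × Z` satisfies the conditional independence
`p(x,y,z)·p_Z(z) = p_{XZ}(x,z)·p_{YZ}(y,z)`, then for every `q > 1` the conditional
Tsallis mutual information `I_q(X:Y|Z)` is at most `f(q,d_X,d_Y)`. -/
theorem tsallis_cond_mutual_info_le_of_cond_indep
    {X Y Z : Type*} [Fintype X] [Fintype Y] [Fintype Z]
    (hdX : 1 ≤ Fintype.card X) (hdY : 1 ≤ Fintype.card Y) (hdZ : 1 ≤ Fintype.card Z)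
    (p : X × Y × Z → ℝ) (hp0 : ∀ t, 0 ≤ p t) (hp1 : ∑ t, p t = 1)
    (hCI : ∀ x y z, p (x, y, z) * (∑ x', ∑ y', p (x', y', z))
      = (∑ y', p (x, y', z)) * (∑ x', p (x', y, z)))
    (q : ℝ) (hq : 1 < q) :
    tsallisEnt q (fun w : X × Z => ∑ y, p (w.1, y, w.2))
        + tsallisEnt q (fun w : Y × Z => ∑ x, p (x, w.1, w.2))
        - tsallisEnt q (fun z => ∑ x, ∑ y, p (x, y, z))
        - tsallisEnt q p
      ≤ fBound q (Fintype.card X) (Fintype.card Y) :=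
  tsallis_cond_mutual_info_le_of_cond_indep_general hdX hdY p hp0 hp1 hCI q hq
end

section
/- There exists a probability distribution p on three binary variables X, Y, Z satisfying the conditional independence p(x,y,z)·p_Z(z) = p_{XZ}(x,z)·p_{YZ}(y,z) for all x, y, z, namely p(x,y,0) = 1/4 and p(x,y,1) = 0 for all x, y ∈ {0,1}, whose order-2 conditional Tsallis mutual information is strictly positive: I_2(X:Y|Z) = 1/4. -/
/-! Tsallis entropy is not additive but pseudo-additive on product distributions:
`S_q(p ⊗ r) = S_q(p) + S_q(r) + (1 - q) S_q(p) S_q(r)`. In the example `Z` is deterministic, so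
`I_q(X:Y|Z) = S_q(X) + S_q(Y) - S_q(XY) = (q - 1) S_q(X) S_q(Y)`, which for two uniform bits and
`q = 2` is `(1/2)(1/2) = 1/4`, although `X` and `Y` are conditionally independent. -/

open Finset

/-- The distribution on three binary variables with `p(x,y,0) = 1/4` and
`p(x,y,1) = 0`. -/
noncomputable def pCE : Fin 2 × Fin 2 × Fin 2 → ℝ :=
  fun t => if t.2.2 = 0 then 1 / 4 else 0

section Tsallis

variable {α β : Type*} [Fintype α] [Fintype β] {q : ℝ}

theorem tsallisEnt_mul {p : α → ℝ} {r : β → ℝ} (hp : ∀ x, 0 ≤ p x) (hr : ∀ y, 0 ≤ r y) :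
    tsallisEnt q (fun t : α × β => p t.1 * r t.2) =
      tsallisEnt q p + tsallisEnt q r + (1 - q) * tsallisEnt q p * tsallisEnt q r := by
  have hsupp : univ.filter (fun t : α × β => 0 < p t.1 * r t.2) =
      univ.filter (fun x => 0 < p x) ×ˢ univ.filter (fun y => 0 < r y) := by
    ext ⟨x, y⟩
    simp only [mem_filter, mem_univ, true_and, mem_product]
    exact ⟨fun h => ⟨pos_of_mul_pos_left h (hr y), pos_of_mul_pos_right h (hp x)⟩,
      fun h => mul_pos h.1 h.2⟩
  -- at `q = 1` the junk value `1 / 0 = 0` makes all three entropies vanish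
  have hc : (1 - q) * (1 / (1 - q)) * (1 / (1 - q)) = 1 / (1 - q) := by
    rcases eq_or_ne q 1 with rfl | hq
    · simp
    · field_simp [sub_ne_zero.2 hq.symm]
  unfold tsallisEnt
  rw [hsupp, sum_product]
  simp_rw [Real.mul_rpow (hp _) (hr _), ← sum_mul_sum]
  linear_combination (-(∑ x ∈ univ.filter (fun x => 0 < p x), p x ^ q - 1) *
    (∑ y ∈ univ.filter (fun y => 0 < r y), r y ^ q - 1)) * hc

theorem tsallisEnt_pi_single [DecidableEq α] (a : α) : tsallisEnt q (Pi.single a 1 : α → ℝ) = 0 := by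
  have hsupp : univ.filter (fun x => 0 < (Pi.single a 1 : α → ℝ) x) = {a} := by
    ext x
    rcases eq_or_ne x a with rfl | hx <;> simp [*]
  simp [tsallisEnt, hsupp]

theorem tsallisEnt_const {c : ℝ} (hc : 0 < c) :
    tsallisEnt q (fun _ : α => c) = 1 / (1 - q) * (Fintype.card α * c ^ q - 1) := by
  simp [tsallisEnt, hc]

end Tsallis

noncomputable def uniformBit : Fin 2 → ℝ := fun _ => 1 / 2

theorem tsallisEnt_two_uniformBit : tsallisEnt 2 uniformBit = 1 / 2 := by
  unfold uniformBit
  rw [tsallisEnt_const (by norm_num)]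
  norm_num

theorem pCE_eq_mul :
    pCE = fun t => uniformBit t.1 * (uniformBit t.2.1 * (Pi.single 0 1 : Fin 2 → ℝ) t.2.2) := by
  funext ⟨x, y, z⟩
  fin_cases z <;> simp [pCE, uniformBit]
  norm_num

theorem pCE_sum_y :
    (fun w : Fin 2 × Fin 2 => ∑ y, pCE (w.1, y, w.2)) =
      fun w => uniformBit w.1 * (Pi.single 0 1 : Fin 2 → ℝ) w.2 := by
  funext ⟨x, z⟩
  fin_cases z <;> simp [pCE, uniformBit]
  norm_num

theorem pCE_sum_x :
    (fun w : Fin 2 × Fin 2 => ∑ x, pCE (x, w.1, w.2)) =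
      fun w => uniformBit w.1 * (Pi.single 0 1 : Fin 2 → ℝ) w.2 := by
  funext ⟨y, z⟩
  fin_cases z <;> simp [pCE, uniformBit]
  norm_num

theorem pCE_sum_xy : (fun z => ∑ x, ∑ y, pCE (x, y, z)) = (Pi.single 0 1 : Fin 2 → ℝ) := by
  funext z
  fin_cases z <;> simp [pCE]
  norm_num

/-- The distribution `pCE` is a probability distribution satisfying the conditional
independence `p(x,y,z)·p_Z(z) = p_{XZ}(x,z)·p_{YZ}(y,z)` for all `x, y, z`, yet its
order-2 conditional Tsallis mutual information `I_2(X:Y|Z)` equals `1/4 > 0`. -/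
theorem tsallis_cond_mutual_info_counterexample :
    (∀ t, 0 ≤ pCE t) ∧ (∑ t, pCE t = 1) ∧
    (∀ x y z, pCE (x, y, z) * (∑ x', ∑ y', pCE (x', y', z))
      = (∑ y', pCE (x, y', z)) * (∑ x', pCE (x', y, z))) ∧
    tsallisEnt 2 (fun w : Fin 2 × Fin 2 => ∑ y, pCE (w.1, y, w.2))
        + tsallisEnt 2 (fun w : Fin 2 × Fin 2 => ∑ x, pCE (x, w.1, w.2))
        - tsallisEnt 2 (fun z => ∑ x, ∑ y, pCE (x, y, z))
        - tsallisEnt 2 pCE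
      = 1 / 4 := by
  refine ⟨fun t => by unfold pCE; split <;> norm_num, by simp [pCE, Fintype.sum_prod_type]; norm_num,
    fun x y z => by fin_cases z <;> norm_num [pCE], ?_⟩
  have hu : ∀ x, 0 ≤ uniformBit x := fun _ => by norm_num [uniformBit]
  have hδ : 0 ≤ (Pi.single 0 1 : Fin 2 → ℝ) := Pi.single_nonneg.2 zero_le_one
  rw [pCE_sum_y, pCE_sum_x, pCE_sum_xy, pCE_eq_mul,
    tsallisEnt_mul (r := fun w : Fin 2 × Fin 2 => uniformBit w.1 * (Pi.single 0 1 : Fin 2 → ℝ) w.2)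
      hu fun w => mul_nonneg (hu _) (hδ _),
    tsallisEnt_mul hu hδ, tsallisEnt_pi_single, tsallisEnt_two_uniformBit]
  norm_num
end

section
/- Let p be a probability distribution on a finite type Z of cardinality k and for each z ∈ Z let ρ^{(z)} be a d_A × d_A density matrix. Let ρ_{AZ} be the classical-quantum state indexed by pairs (a,z), with entries (ρ_{AZ})_{(a,z),(a',z')} = p(z)·(ρ^{(z)})_{a,a'} if z = z' and 0 otherwise. Then for every real q > 0 with q ≠ 1, S_q(ρ_{AZ}) = ∑_{z with p(z)>0} p(z)^q·S_q(ρ^{(z)}) + S_q(p), where S_q(p) is the classical Tsallis entropy of the distribution p. -/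
open Finset Matrix ComplexOrder

/-- Quantum Tsallis entropy of order `q` of a matrix `ρ` (intended: a density
matrix), defined via the eigenvalues of `ρ` when `ρ` is Hermitian, with the sum
restricted to the strictly positive eigenvalues. -/
noncomputable def qTsallis {n : Type*} [Fintype n] [DecidableEq n]
    (q : ℝ) (ρ : Matrix n n ℂ) : ℝ :=
  if h : ρ.IsHermitian then
    (1 / (1 - q)) * ((∑ i ∈ univ.filter (fun i => 0 < h.eigenvalues i),
      h.eigenvalues i ^ q) - 1)
  else 0

/-!
The cq-state is the block-diagonal matrix with blocks `p z • ρ z`. Its characteristic polynomial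
is the product of those of the blocks, so its eigenvalues, with multiplicity, are the products
`p z * λᵢ(ρ z)`. For `p z > 0` the positive ones among them are exactly those with
`λᵢ(ρ z) > 0`, and `(p z * λ) ^ q = p z ^ q * λ ^ q`, so the power sum of the cq-state is
`∑_{p z > 0} p z ^ q * ∑_{λᵢ(ρ z) > 0} λᵢ(ρ z) ^ q`. The rest is rearranging the factor
`1 / (1 - q)`.
-/

namespace Matrix

open Polynomial

variable {n o : Type*} [Fintype n] [DecidableEq n] [Fintype o] [DecidableEq o]

theorem charpoly_blockDiagonal {R : Type*} [CommRing R] (M : o → Matrix n n R) :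
    (blockDiagonal M).charpoly = ∏ z, (M z).charpoly := by
  have hchar : charmatrix (blockDiagonal M) = blockDiagonal fun z => charmatrix (M z) := by
    ext ⟨i, z⟩ ⟨j, z'⟩
    by_cases hz : z = z'
    · subst hz
      by_cases hij : i = j
      · subst hij; simp [blockDiagonal_apply]
      · simp [blockDiagonal_apply, hij]
    · simp [blockDiagonal_apply, hz]
  rw [charpoly, hchar, det_blockDiagonal]
  rfl

namespace IsHermitian

variable {𝕜 : Type*} [RCLike 𝕜] {A : Matrix n n 𝕜}

theorem charpoly_real_smul (hA : A.IsHermitian) (c : ℝ) :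
    ((c : 𝕜) • A).charpoly = ∏ i, (X - C ((c * hA.eigenvalues i : ℝ) : 𝕜)) := by
  have hcfc : cfc (c * ·) A = (c : 𝕜) • A := by
    rw [cfc_const_mul c (fun x : ℝ => x) A, cfc_id' ℝ A, RCLike.real_smul_eq_coe_smul (K := 𝕜)]
  rw [← hcfc, hA.charpoly_cfc_eq]

theorem sum_comp_eigenvalues_of_charpoly_eq (hA : A.IsHermitian) {ι : Type*} [Fintype ι]
    {μ : ι → ℝ} (h : A.charpoly = ∏ j, (X - C (μ j : 𝕜))) (f : ℝ → ℝ) :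
    ∑ i, f (hA.eigenvalues i) = ∑ j, f (μ j) := by
  have hroots : univ.val.map hA.eigenvalues = univ.val.map μ := by
    apply Multiset.map_injective (RCLike.ofReal_injective (K := 𝕜))
    rw [Multiset.map_map, Multiset.map_map, ← hA.roots_charpoly_eq_eigenvalues, h,
      ← roots_multiset_prod_X_sub_C (univ.val.map _), Multiset.map_map]
    rfl
  simpa only [Finset.sum_eq_multiset_sum, Multiset.map_map, Function.comp_def]
    using congrArg (fun s => (s.map f).sum) hroots

theorem sum_comp_eigenvalues_blockDiagonal_real_smul {M : o → Matrix n n 𝕜}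
    (hM : ∀ z, (M z).IsHermitian) (c : o → ℝ)
    (hB : (blockDiagonal fun z => (c z : 𝕜) • M z).IsHermitian) (f : ℝ → ℝ) :
    ∑ iz, f (hB.eigenvalues iz) = ∑ z, ∑ i, f (c z * (hM z).eigenvalues i) := by
  rw [← Fintype.sum_prod_type_right
    (f := fun iz : n × o => f (c iz.2 * (hM iz.2).eigenvalues iz.1))]
  refine hB.sum_comp_eigenvalues_of_charpoly_eq ?_ f
  rw [charpoly_blockDiagonal, Fintype.prod_prod_type_right]
  exact prod_congr rfl fun z _ => (hM z).charpoly_real_smul (c z)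

end IsHermitian

end Matrix

theorem Finset.sum_ite_pos_mul_rpow {ι : Type*} (s : Finset ι) (f : ι → ℝ) {c : ℝ}
    (hc : 0 ≤ c) (q : ℝ) :
    ∑ i ∈ s, (if 0 < c * f i then (c * f i) ^ q else 0)
      = if 0 < c then c ^ q * ∑ i ∈ s.filter (fun i => 0 < f i), f i ^ q else 0 := by
  rcases hc.eq_or_lt with rfl | hc
  · simp
  rw [if_pos hc, ← sum_filter]
  simp only [mul_pos_iff_of_pos_left hc, mul_sum]
  exact sum_congr rfl fun i hi => Real.mul_rpow hc.le (mem_filter.mp hi).2.le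

theorem quantum_tsallis_cq_state_entropy_general
    {dA : ℕ} {Z : Type*} [Fintype Z] [DecidableEq Z]
    (p : Z → ℝ) (hp0 : ∀ z, 0 ≤ p z)
    (ρ : Z → Matrix (Fin dA) (Fin dA) ℂ)
    (hρ : ∀ z, (ρ z).PosSemidef)
    (q : ℝ) :
    qTsallis q (Matrix.of fun (az az' : Fin dA × Z) =>
        if az.2 = az'.2 then (p az.2 : ℂ) * ρ az.2 az.1 az'.1 else 0)
      = (∑ z ∈ univ.filter (fun z => 0 < p z), p z ^ q * qTsallis q (ρ z))
        + tsallisEnt q p := by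
  have hcq : (Matrix.of fun (az az' : Fin dA × Z) =>
        if az.2 = az'.2 then (p az.2 : ℂ) * ρ az.2 az.1 az'.1 else 0)
      = blockDiagonal fun z => (p z : ℂ) • ρ z := by
    ext ⟨a, z⟩ ⟨a', z'⟩
    simp [blockDiagonal_apply]
  have hρH : ∀ z, (ρ z).IsHermitian := fun z => (hρ z).1
  have hH : (blockDiagonal fun z => (p z : ℂ) • ρ z).IsHermitian :=
    isHermitian_blockDiagonal_iff.mpr fun z => by
      simpa [RCLike.real_smul_eq_coe_smul] using (hρH z).smul (IsSelfAdjoint.all (p z))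
  have hspec : ∑ iz ∈ univ.filter (fun iz => 0 < hH.eigenvalues iz), hH.eigenvalues iz ^ q
      = ∑ z ∈ univ.filter (fun z => 0 < p z),
          p z ^ q * ∑ i ∈ univ.filter (fun i => 0 < (hρH z).eigenvalues i),
            (hρH z).eigenvalues i ^ q := by
    rw [sum_filter, sum_filter, hH.sum_comp_eigenvalues_blockDiagonal_real_smul hρH p
      (fun x => if 0 < x then x ^ q else 0)]
    exact sum_congr rfl fun z _ => sum_ite_pos_mul_rpow _ _ (hp0 z) q
  have hweighted : ∀ z, p z ^ q * qTsallis q (ρ z) = 1 / (1 - q) *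
      (p z ^ q * ∑ i ∈ univ.filter (fun i => 0 < (hρH z).eigenvalues i),
        (hρH z).eigenvalues i ^ q - p z ^ q) := fun z => by
    rw [qTsallis, dif_pos (hρH z)]
    ring
  rw [hcq, qTsallis, dif_pos hH, hspec, tsallisEnt, sum_congr rfl fun z _ => hweighted z,
    ← mul_sum, sum_sub_distrib]
  ring

/-- For a classical-quantum state `ρ_{AZ} = ∑_z p(z) ρ^{(z)} ⊗ |z⟩⟨z|`, the
quantum Tsallis entropy satisfies
`S_q(ρ_{AZ}) = ∑_{z : p(z)>0} p(z)^q S_q(ρ^{(z)}) + S_q(p)` for all `q > 0`,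
`q ≠ 1`. -/
theorem quantum_tsallis_cq_state_entropy
    {dA : ℕ} {Z : Type*} [Fintype Z] [DecidableEq Z]
    (p : Z → ℝ) (hp0 : ∀ z, 0 ≤ p z) (hp1 : ∑ z, p z = 1)
    (ρ : Z → Matrix (Fin dA) (Fin dA) ℂ)
    (hρ : ∀ z, (ρ z).PosSemidef) (hρ1 : ∀ z, (ρ z).trace = 1)
    (q : ℝ) (hq : 0 < q) (hq1 : q ≠ 1) :
    qTsallis q (Matrix.of fun (az az' : Fin dA × Z) =>
        if az.2 = az'.2 then (p az.2 : ℂ) * ρ az.2 az.1 az'.1 else 0)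
      = (∑ z ∈ univ.filter (fun z => 0 < p z), p z ^ q * qTsallis q (ρ z))
        + tsallisEnt q p :=
  quantum_tsallis_cq_state_entropy_general p hp0 ρ hρ q
end

section
/- Let p be a probability distribution on a finite type C of cardinality k and for each c ∈ C let ρ_A^{(c)} and ρ_B^{(c)} be density matrices of sizes d_A × d_A and d_B × d_B. Let ρ_{ABC} be the state indexed by triples (a,b,c) with entries (ρ_{ABC})_{(a,b,c),(a',b',c')} = p(c)·(ρ_A^{(c)})_{a,a'}·(ρ_B^{(c)})_{b,b'} if c = c' and 0 otherwise. Then for every real q > 1, the conditional quantum Tsallis mutual information satisfies I_q(A:B|C) = S_q(ρ_{AC}) + S_q(ρ_{BC}) − S_q(ρ_C) − S_q(ρ_{ABC}) ≤ f(q,d_A,d_B), where ρ_{AC}, ρ_{BC}, ρ_C are the partial traces of ρ_{ABC}; moreover I_q(A:B|C) = ∑_{c with p(c)>0} p(c)^q·(S_q(ρ_A^{(c)}) + S_q(ρ_B^{(c)}) − S_q(ρ_A^{(c)} ⊗ ρ_B^{(c)})). -/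
open Finset Matrix Kronecker ComplexOrder

/-- Partial trace over the second factor of a tripartite matrix. -/
noncomputable def ptraceB {α β γ : Type*} [Fintype β]
    (ρ : Matrix (α × β × γ) (α × β × γ) ℂ) : Matrix (α × γ) (α × γ) ℂ :=
  Matrix.of fun w w' => ∑ b, ρ (w.1, b, w.2) (w'.1, b, w'.2)

/-- Partial trace over the first factor of a tripartite matrix. -/
noncomputable def ptraceA {α β γ : Type*} [Fintype α]
    (ρ : Matrix (α × β × γ) (α × β × γ) ℂ) : Matrix (β × γ) (β × γ) ℂ :=
  Matrix.of fun w w' => ∑ a, ρ (a, w.1, w.2) (a, w'.1, w'.2)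

/-- Partial trace over the first two factors of a tripartite matrix. -/
noncomputable def ptraceAB {α β γ : Type*} [Fintype α] [Fintype β]
    (ρ : Matrix (α × β × γ) (α × β × γ) ℂ) : Matrix γ γ ℂ :=
  Matrix.of fun c c' => ∑ a, ∑ b, ρ (a, b, c) (a, b, c')

/-! Up to reordering the tensor factors, the cq-state is the block-diagonal matrix
`⊕_c p(c) (ρ_A^{(c)} ⊗ ρ_B^{(c)})`, and its partial traces are `⊕_c p(c) ρ_A^{(c)}`,
`⊕_c p(c) ρ_B^{(c)}` and `diag p`. Conjugating each block into a unitary eigenbasis shows that the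
eigenvalues of a block-diagonal matrix are those of its blocks and the eigenvalues of a Kronecker
product are the pairwise products. This gives the chain rule
`S_q(⊕_c p(c) σ_c) = S_q(diag p) + ∑_{p(c)>0} p(c)^q S_q(σ_c)`, from which the identity follows
(the four `S_q(diag p)` terms cancel), and pseudo-additivity
`S_q(A ⊗ B) = S_q(A) + S_q(B) + (1 - q) S_q(A) S_q(B)`. The latter turns each summand into
`(q - 1) S_q(ρ_A^{(c)}) S_q(ρ_B^{(c)})`, which `0 ≤ S_q ≤ (1 - d^{1-q})/(q - 1)` bounds by
`f(q, d_A, d_B)`; finally `∑_c p(c)^q ≤ ∑_c p(c) = 1`. -/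

section PosRpowSum

variable {ι κ : Type*} [Fintype ι] [Fintype κ]

noncomputable def posRpowSum (q : ℝ) (d : ι → ℝ) : ℝ :=
  ∑ i ∈ univ.filter (fun i => 0 < d i), d i ^ q

theorem posRpowSum_eq_of_map_eq (q : ℝ) {d : ι → ℝ} {e : κ → ℝ}
    (h : univ.val.map d = univ.val.map e) : posRpowSum q d = posRpowSum q e := by
  rw [posRpowSum, posRpowSum, sum_filter, sum_filter, sum_eq_multiset_sum, sum_eq_multiset_sum]
  simpa only [Multiset.map_map, Function.comp_def]
    using congrArg (fun s => (s.map fun x => if 0 < x then x ^ q else 0).sum) h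

theorem posRpowSum_comp_equiv (q : ℝ) (d : ι → ℝ) (e : κ ≃ ι) :
    posRpowSum q (d ∘ e) = posRpowSum q d := by
  simp only [posRpowSum, sum_filter]
  exact e.sum_comp fun i => if 0 < d i then d i ^ q else 0

theorem posRpowSum_of_nonneg {q : ℝ} (hq : q ≠ 0) {d : ι → ℝ} (hd : 0 ≤ d) :
    posRpowSum q d = ∑ i, d i ^ q := by
  rw [posRpowSum, sum_filter]
  refine sum_congr rfl fun i _ => ?_
  rcases (show (0 : ℝ) ≤ d i from hd i).eq_or_lt with h | h
  · simp [← h, Real.zero_rpow hq]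
  · simp [h]

theorem ite_pos_mul_rpow {x y : ℝ} (hx : 0 ≤ x) (hy : 0 ≤ y) (q : ℝ) :
    (if 0 < x * y then (x * y) ^ q else 0)
      = (if 0 < x then x ^ q else 0) * (if 0 < y then y ^ q else 0) := by
  rcases hx.eq_or_lt with rfl | hx
  · simp
  rcases hy.eq_or_lt with rfl | hy
  · simp
  simp [mul_pos hx hy, hx, hy, Real.mul_rpow hx.le hy.le]

theorem posRpowSum_mul_fiberwise (q : ℝ) {p : κ → ℝ} (hp : 0 ≤ p) {e : κ → ι → ℝ}
    (he : ∀ k, 0 ≤ e k) :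
    posRpowSum q (fun x : ι × κ => p x.2 * e x.2 x.1)
      = ∑ k ∈ univ.filter (fun k => 0 < p k), p k ^ q * posRpowSum q (e k) := by
  have hfactor := fun k i => ite_pos_mul_rpow (hp k) (he k i) q
  simp only [posRpowSum, sum_filter, Fintype.sum_prod_type, hfactor]
  rw [Finset.sum_comm]
  refine sum_congr rfl fun k _ => ?_
  split_ifs <;> simp [mul_sum]

theorem posRpowSum_mul (q : ℝ) {d : ι → ℝ} (hd : 0 ≤ d) {e : κ → ℝ} (he : 0 ≤ e) :
    posRpowSum q (fun x : ι × κ => d x.1 * e x.2) = posRpowSum q d * posRpowSum q e := by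
  simp_rw [mul_comm (d _), posRpowSum_mul_fiberwise q he fun _ => hd, ← sum_mul, mul_comm]
  rfl

theorem posRpowSum_le_one {q : ℝ} (hq : 1 ≤ q) {d : ι → ℝ} (hd : 0 ≤ d) (hs : ∑ i, d i = 1) :
    posRpowSum q d ≤ 1 :=
  calc posRpowSum q d ≤ ∑ i ∈ univ.filter (fun i => 0 < d i), d i :=
        sum_le_sum fun i _ => Real.rpow_le_self_of_le_one (hd i)
          (hs ▸ single_le_sum (fun j _ => hd j) (mem_univ i)) hq
    _ ≤ ∑ i, d i := sum_le_sum_of_subset_of_nonneg (subset_univ _) fun i _ _ => hd i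
    _ = 1 := hs

theorem card_rpow_le_posRpowSum {q : ℝ} (hq : 1 ≤ q) {d : ι → ℝ} (hd : 0 ≤ d)
    (hs : ∑ i, d i = 1) : (Fintype.card ι : ℝ) ^ (1 - q) ≤ posRpowSum q d := by
  have hcard : (0 : ℝ) < Fintype.card ι := by
    have : Nonempty ι := by
      by_contra h
      simp [not_nonempty_iff.mp h] at hs
    exact_mod_cast Fintype.card_pos
  have hpow := Real.rpow_sum_le_const_mul_sum_rpow_of_nonneg univ hq fun i _ => hd i
  rw [hs, Real.one_rpow, card_univ] at hpow
  rw [posRpowSum_of_nonneg (by positivity) hd]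
  calc (Fintype.card ι : ℝ) ^ (1 - q)
      = (Fintype.card ι : ℝ) ^ (1 - q) * 1 := (mul_one _).symm
    _ ≤ (Fintype.card ι : ℝ) ^ (1 - q) * ((Fintype.card ι : ℝ) ^ (q - 1) * ∑ i, d i ^ q) :=
        mul_le_mul_of_nonneg_left hpow (by positivity)
    _ = ∑ i, d i ^ q := by
        rw [← mul_assoc, ← Real.rpow_add hcard]
        simp

end PosRpowSum

namespace Matrix

variable {n m : Type*} [Fintype n] [DecidableEq n] [Fintype m] [DecidableEq m]

/-- Unlike the sorted family `IsHermitian.eigenvalues`, `d` may list the eigenvalues in any order,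
which is what makes the notion stable under `⊗ₖ`, `blockDiagonal` and reindexing. -/
def HasEigenvalues (A : Matrix n n ℂ) (d : n → ℝ) : Prop :=
  ∃ U ∈ unitaryGroup n ℂ, A = U * diagonal (fun i => (d i : ℂ)) * star U

theorem IsHermitian.hasEigenvalues {A : Matrix n n ℂ} (hA : A.IsHermitian) :
    HasEigenvalues A hA.eigenvalues :=
  ⟨_, hA.eigenvectorUnitary.2, hA.spectral_theorem⟩

namespace HasEigenvalues

variable {A : Matrix n n ℂ} {d : n → ℝ}

theorem isHermitian (hA : HasEigenvalues A d) : A.IsHermitian := by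
  obtain ⟨U, -, rfl⟩ := hA
  exact isHermitian_mul_mul_conjTranspose U
    (isHermitian_diagonal_of_self_adjoint _ (by ext; simp))

open Polynomial in
theorem roots_charpoly (hA : HasEigenvalues A d) :
    A.charpoly.roots = univ.val.map fun i => (d i : ℂ) := by
  obtain ⟨U, hU, rfl⟩ := hA
  rw [charpoly_mul_comm, ← Matrix.mul_assoc, mem_unitaryGroup_iff'.mp hU, Matrix.one_mul,
    charpoly_diagonal, roots_prod _ _ (by simp [prod_ne_zero_iff, X_sub_C_ne_zero])]
  simp

theorem map_eq_map_eigenvalues (hA : HasEigenvalues A d) :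
    univ.val.map d = univ.val.map hA.isHermitian.eigenvalues := by
  have h := hA.roots_charpoly.symm.trans hA.isHermitian.roots_charpoly_eq_eigenvalues
  simpa [Multiset.map_map, Function.comp_def] using congrArg (Multiset.map Complex.re) h

theorem smul (hA : HasEigenvalues A d) (r : ℝ) : HasEigenvalues ((r : ℂ) • A) (r • d) := by
  obtain ⟨U, hU, rfl⟩ := hA
  refine ⟨U, hU, ?_⟩
  have hdiag : (diagonal fun i => (((r • d) i : ℝ) : ℂ))
      = (r : ℂ) • diagonal fun i => (d i : ℂ) := by
    rw [← diagonal_smul]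
    congr 1
    ext i
    simp
  rw [hdiag, Matrix.mul_smul, Matrix.smul_mul]

theorem kronecker {B : Matrix m m ℂ} {e : m → ℝ} (hA : HasEigenvalues A d)
    (hB : HasEigenvalues B e) : HasEigenvalues (A ⊗ₖ B) fun x => d x.1 * e x.2 := by
  obtain ⟨U, hU, rfl⟩ := hA
  obtain ⟨V, hV, rfl⟩ := hB
  refine ⟨U ⊗ₖ V, kronecker_mem_unitary hU hV, ?_⟩
  simp only [star_eq_conjTranspose]
  rw [conjTranspose_kronecker, mul_kronecker_mul, mul_kronecker_mul,
    diagonal_kronecker_diagonal]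
  simp

theorem blockDiagonal {o : Type*} [Fintype o] [DecidableEq o] {M : o → Matrix n n ℂ}
    {d : o → n → ℝ} (hM : ∀ k, HasEigenvalues (M k) (d k)) :
    HasEigenvalues (Matrix.blockDiagonal M) fun x => d x.2 x.1 := by
  choose U hU hMU using hM
  obtain rfl : M = _ := funext hMU
  refine ⟨Matrix.blockDiagonal U, ?_, ?_⟩
  · have hUU : ∀ k, U k * (U k)ᴴ = 1 := fun k => mem_unitaryGroup_iff.mp (hU k)
    rw [mem_unitaryGroup_iff, star_eq_conjTranspose, blockDiagonal_conjTranspose,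
      ← blockDiagonal_mul]
    simp only [hUU]
    exact blockDiagonal_one
  · simp_rw [star_eq_conjTranspose, blockDiagonal_conjTranspose, blockDiagonal_mul,
      blockDiagonal_diagonal]

theorem submatrix (hA : HasEigenvalues A d) (e : m ≃ n) :
    HasEigenvalues (A.submatrix e e) (d ∘ e) := by
  obtain ⟨U, hU, rfl⟩ := hA
  refine ⟨U.submatrix e e, ?_, ?_⟩
  · rw [mem_unitaryGroup_iff, star_eq_conjTranspose, conjTranspose_submatrix,
      submatrix_mul_equiv, ← star_eq_conjTranspose, mem_unitaryGroup_iff.mp hU,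
      submatrix_one_equiv]
  · rw [star_eq_conjTranspose, star_eq_conjTranspose, conjTranspose_submatrix,
      ← submatrix_mul_equiv _ _ _ e, ← submatrix_mul_equiv _ _ _ e, submatrix_diagonal_equiv]
    rfl

theorem diagonal (d : n → ℝ) : HasEigenvalues (diagonal fun i => (d i : ℂ)) d :=
  ⟨1, one_mem _, by simp⟩

end HasEigenvalues

end Matrix

section Tsallis

variable {n m : Type*} [Fintype n] [DecidableEq n] [Fintype m] [DecidableEq m]

theorem qTsallis_eq_of_hasEigenvalues {A : Matrix n n ℂ} {d : n → ℝ}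
    (hA : A.HasEigenvalues d) (q : ℝ) : qTsallis q A = 1 / (1 - q) * (posRpowSum q d - 1) := by
  rw [qTsallis, dif_pos hA.isHermitian, posRpowSum_eq_of_map_eq q hA.map_eq_map_eigenvalues]
  rfl

theorem qTsallis_submatrix_equiv (q : ℝ) (A : Matrix n n ℂ) (e : m ≃ n) :
    qTsallis q (A.submatrix e e) = qTsallis q A := by
  by_cases hA : A.IsHermitian
  · rw [qTsallis_eq_of_hasEigenvalues (hA.hasEigenvalues.submatrix e),
      qTsallis_eq_of_hasEigenvalues hA.hasEigenvalues, posRpowSum_comp_equiv]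
  · have hAe : ¬(A.submatrix e e).IsHermitian := by rwa [isHermitian_submatrix_equiv]
    rw [qTsallis, qTsallis, dif_neg hA, dif_neg hAe]

theorem qTsallis_kronecker {A : Matrix n n ℂ} {B : Matrix m m ℂ} (hA : A.PosSemidef)
    (hB : B.PosSemidef) (q : ℝ) :
    qTsallis q (A ⊗ₖ B)
      = qTsallis q A + qTsallis q B + (1 - q) * qTsallis q A * qTsallis q B := by
  rw [qTsallis_eq_of_hasEigenvalues (hA.1.hasEigenvalues.kronecker hB.1.hasEigenvalues),
    posRpowSum_mul q hA.eigenvalues_nonneg hB.eigenvalues_nonneg,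
    qTsallis_eq_of_hasEigenvalues hA.1.hasEigenvalues,
    qTsallis_eq_of_hasEigenvalues hB.1.hasEigenvalues]
  rcases eq_or_ne q 1 with rfl | hq
  · simp
  · field_simp [sub_ne_zero.mpr hq.symm]
    ring

theorem qTsallis_blockDiagonal_smul {o : Type*} [Fintype o] [DecidableEq o] {p : o → ℝ}
    (hp : 0 ≤ p) {σ : o → Matrix n n ℂ} (hσ : ∀ k, (σ k).PosSemidef) (q : ℝ) :
    qTsallis q (blockDiagonal fun k => (p k : ℂ) • σ k)
      = qTsallis q (diagonal fun k => (p k : ℂ))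
        + ∑ k ∈ univ.filter (fun k => 0 < p k), p k ^ q * qTsallis q (σ k) := by
  have hspec := HasEigenvalues.blockDiagonal fun k => (hσ k).1.hasEigenvalues.smul (p k)
  simp only [Pi.smul_apply, smul_eq_mul] at hspec
  rw [qTsallis_eq_of_hasEigenvalues hspec, qTsallis_eq_of_hasEigenvalues (.diagonal p),
    posRpowSum_mul_fiberwise q hp fun k => (hσ k).eigenvalues_nonneg]
  simp only [qTsallis_eq_of_hasEigenvalues (hσ _).1.hasEigenvalues]
  have hweighted : ∑ k ∈ univ.filter (fun k => 0 < p k),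
      p k ^ q * (1 / (1 - q) * (posRpowSum q (hσ k).1.eigenvalues - 1))
      = 1 / (1 - q) * ∑ k ∈ univ.filter (fun k => 0 < p k),
          p k ^ q * posRpowSum q (hσ k).1.eigenvalues
        - 1 / (1 - q) * ∑ k ∈ univ.filter (fun k => 0 < p k), p k ^ q := by
    rw [mul_sum, mul_sum, ← sum_sub_distrib]
    exact sum_congr rfl fun k _ => by ring
  rw [hweighted, posRpowSum]
  ring

end Tsallis

section DensityMatrix

variable {n : Type*} [Fintype n] [DecidableEq n]

theorem Matrix.IsHermitian.sum_eigenvalues_eq_one {A : Matrix n n ℂ} (hA : A.IsHermitian)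
    (h1 : A.trace = 1) : ∑ i, hA.eigenvalues i = 1 := by
  simpa [h1] using (congrArg Complex.re hA.trace_eq_sum_eigenvalues).symm

variable {A : Matrix n n ℂ} (hA : A.PosSemidef) (hA1 : A.trace = 1) {q : ℝ} (hq : 1 < q)
include hA hA1 hq

theorem qTsallis_nonneg_of_trace_eq_one : 0 ≤ qTsallis q A := by
  rw [qTsallis_eq_of_hasEigenvalues hA.1.hasEigenvalues]
  have hP := posRpowSum_le_one hq.le hA.eigenvalues_nonneg (hA.1.sum_eigenvalues_eq_one hA1)
  exact mul_nonneg_of_nonpos_of_nonpos (by rw [one_div_nonpos]; linarith) (by linarith)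

theorem qTsallis_le_of_trace_eq_one :
    qTsallis q A ≤ (1 - (Fintype.card n : ℝ) ^ (1 - q)) / (q - 1) := by
  rw [qTsallis_eq_of_hasEigenvalues hA.1.hasEigenvalues,
    show ∀ x : ℝ, 1 / (1 - q) * (x - 1) = (1 - x) / (q - 1) by
      intro x; field_simp [sub_ne_zero.mpr hq.ne, sub_ne_zero.mpr hq.ne']; ring]
  gcongr
  exact card_rpow_le_posRpowSum hq.le hA.eigenvalues_nonneg (hA.1.sum_eigenvalues_eq_one hA1)

end DensityMatrix

theorem fBound_nonneg {q : ℝ} (hq : 1 < q) (a b : ℕ) : 0 ≤ fBound q a b := by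
  have hfactor : ∀ a : ℕ, 0 ≤ 1 - (a : ℝ) ^ (1 - q) := fun a => by
    rcases Nat.eq_zero_or_pos a with rfl | ha
    · simp [Real.zero_rpow (by linarith : 1 - q ≠ 0)]
    · linarith [Real.rpow_le_one_of_one_le_of_nonpos (by exact_mod_cast ha : (1 : ℝ) ≤ a)
        (by linarith : 1 - q ≤ 0)]
  unfold fBound
  exact mul_nonneg (mul_nonneg (one_div_nonneg.mpr (by linarith)) (hfactor a)) (hfactor b)

theorem qTsallis_add_sub_kronecker_le {n m : Type*} [Fintype n] [DecidableEq n] [Fintype m]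
    [DecidableEq m] {A : Matrix n n ℂ} {B : Matrix m m ℂ} (hA : A.PosSemidef)
    (hA1 : A.trace = 1) (hB : B.PosSemidef) (hB1 : B.trace = 1) {q : ℝ} (hq : 1 < q) :
    qTsallis q A + qTsallis q B - qTsallis q (A ⊗ₖ B)
      ≤ fBound q (Fintype.card n) (Fintype.card m) := by
  have hSA := qTsallis_le_of_trace_eq_one hA hA1 hq
  have hSB := qTsallis_le_of_trace_eq_one hB hB1 hq
  calc qTsallis q A + qTsallis q B - qTsallis q (A ⊗ₖ B)
      = (q - 1) * qTsallis q A * qTsallis q B := by rw [qTsallis_kronecker hA hB]; ring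
    _ ≤ (q - 1) * ((1 - (Fintype.card n : ℝ) ^ (1 - q)) / (q - 1))
          * ((1 - (Fintype.card m : ℝ) ^ (1 - q)) / (q - 1)) := by
        have hSA0 := qTsallis_nonneg_of_trace_eq_one hA hA1 hq
        have hSB0 := qTsallis_nonneg_of_trace_eq_one hB hB1 hq
        have hq1 : 0 ≤ q - 1 := by linarith
        exact mul_le_mul (mul_le_mul_of_nonneg_left hSA hq1) hSB hSB0
          (mul_nonneg hq1 (hSA0.trans hSA))
    _ = fBound q (Fintype.card n) (Fintype.card m) := by
        unfold fBound
        field_simp [sub_ne_zero.mpr hq.ne']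

section CQState

variable {α β γ : Type*} [DecidableEq γ]

def IsCQProductState (ρ : Matrix (α × β × γ) (α × β × γ) ℂ) (p : γ → ℝ)
    (σ : γ → Matrix α α ℂ) (τ : γ → Matrix β β ℂ) : Prop :=
  ∀ a b c a' b' c', ρ (a, b, c) (a', b', c')
    = if c = c' then (p c : ℂ) * σ c a a' * τ c b b' else 0

variable {ρ : Matrix (α × β × γ) (α × β × γ) ℂ} {p : γ → ℝ} {σ : γ → Matrix α α ℂ}
  {τ : γ → Matrix β β ℂ}

theorem IsCQProductState.eq_submatrix_blockDiagonal (hρ : IsCQProductState ρ p σ τ) :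
    ρ = (blockDiagonal fun c => (p c : ℂ) • (σ c ⊗ₖ τ c)).submatrix
      (Equiv.prodAssoc α β γ).symm (Equiv.prodAssoc α β γ).symm := by
  ext ⟨a, b, c⟩ ⟨a', b', c'⟩
  simp [hρ a b c a' b' c', blockDiagonal_apply, mul_assoc]

theorem IsCQProductState.ptraceB_eq [Fintype β] (hρ : IsCQProductState ρ p σ τ)
    (hτ : ∀ c, (τ c).trace = 1) : ptraceB ρ = blockDiagonal fun c => (p c : ℂ) • σ c := by
  ext ⟨a, c⟩ ⟨a', c'⟩
  simp only [ptraceB, of_apply, blockDiagonal_apply, hρ a _ c a' _ c']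
  split_ifs with h
  · subst h
    rw [← mul_sum, show ∑ b, τ c b b = 1 from hτ c, mul_one]
    rfl
  · simp

theorem IsCQProductState.ptraceA_eq [Fintype α] (hρ : IsCQProductState ρ p σ τ)
    (hσ : ∀ c, (σ c).trace = 1) : ptraceA ρ = blockDiagonal fun c => (p c : ℂ) • τ c := by
  ext ⟨b, c⟩ ⟨b', c'⟩
  simp only [ptraceA, of_apply, blockDiagonal_apply, hρ _ b c _ b' c']
  split_ifs with h
  · subst h
    rw [← sum_mul, ← mul_sum, show ∑ a, σ c a a = 1 from hσ c, mul_one]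
    rfl
  · simp

theorem IsCQProductState.ptraceAB_eq [Fintype α] [Fintype β] (hρ : IsCQProductState ρ p σ τ)
    (hσ : ∀ c, (σ c).trace = 1) (hτ : ∀ c, (τ c).trace = 1) :
    ptraceAB ρ = diagonal fun c => (p c : ℂ) := by
  ext c c'
  simp only [ptraceAB, of_apply, diagonal_apply, hρ _ _ c _ _ c']
  split_ifs with h
  · subst h
    simp_rw [← mul_sum, show ∑ b, τ c b b = 1 from hτ c, mul_one, ← mul_sum,
      show ∑ a, σ c a a = 1 from hσ c, mul_one]
  · simp

theorem IsCQProductState.qTsallis_condMutualInfo_eq [Fintype α] [DecidableEq α] [Fintype β]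
    [DecidableEq β] [Fintype γ] (hρ : IsCQProductState ρ p σ τ) (hp : 0 ≤ p)
    (hσ : ∀ c, (σ c).PosSemidef) (hτ : ∀ c, (τ c).PosSemidef) (hσ1 : ∀ c, (σ c).trace = 1)
    (hτ1 : ∀ c, (τ c).trace = 1) (q : ℝ) :
    qTsallis q (ptraceB ρ) + qTsallis q (ptraceA ρ) - qTsallis q (ptraceAB ρ) - qTsallis q ρ
      = ∑ c ∈ univ.filter (fun c => 0 < p c), p c ^ q *
          (qTsallis q (σ c) + qTsallis q (τ c) - qTsallis q (σ c ⊗ₖ τ c)) := by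
  rw [hρ.ptraceB_eq hτ1, hρ.ptraceA_eq hσ1, hρ.ptraceAB_eq hσ1 hτ1,
    hρ.eq_submatrix_blockDiagonal, qTsallis_submatrix_equiv,
    qTsallis_blockDiagonal_smul hp hσ, qTsallis_blockDiagonal_smul hp hτ,
    qTsallis_blockDiagonal_smul hp fun c => (hσ c).kronecker (hτ c)]
  simp only [mul_sub, mul_add, sum_sub_distrib, sum_add_distrib]
  ring

end CQState

/-- For the state `ρ_{ABC} = ∑_c p(c) ρ_A^{(c)} ⊗ ρ_B^{(c)} ⊗ |c⟩⟨c|` and any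
`q > 1`, the conditional quantum Tsallis mutual information
`I_q(A:B|C) = S_q(ρ_{AC}) + S_q(ρ_{BC}) − S_q(ρ_C) − S_q(ρ_{ABC})` is at most
`f(q,d_A,d_B)`, and equals
`∑_{c : p(c)>0} p(c)^q (S_q(ρ_A^{(c)}) + S_q(ρ_B^{(c)}) − S_q(ρ_A^{(c)} ⊗ ρ_B^{(c)}))`. -/
theorem quantum_tsallis_cond_mutual_info_cq
    {dA dB : ℕ} {C : Type*} [Fintype C] [DecidableEq C]
    (p : C → ℝ) (hp0 : ∀ c, 0 ≤ p c) (hp1 : ∑ c, p c = 1)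
    (ρA : C → Matrix (Fin dA) (Fin dA) ℂ) (ρB : C → Matrix (Fin dB) (Fin dB) ℂ)
    (hρA : ∀ c, (ρA c).PosSemidef) (hρB : ∀ c, (ρB c).PosSemidef)
    (hρA1 : ∀ c, (ρA c).trace = 1) (hρB1 : ∀ c, (ρB c).trace = 1)
    (ρABC : Matrix (Fin dA × Fin dB × C) (Fin dA × Fin dB × C) ℂ)
    (hρABC : ∀ a b c a' b' c', ρABC (a, b, c) (a', b', c')
      = if c = c' then (p c : ℂ) * ρA c a a' * ρB c b b' else 0)
    (q : ℝ) (hq : 1 < q) :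
    qTsallis q (ptraceB ρABC) + qTsallis q (ptraceA ρABC)
        - qTsallis q (ptraceAB ρABC) - qTsallis q ρABC
      ≤ fBound q dA dB
    ∧ qTsallis q (ptraceB ρABC) + qTsallis q (ptraceA ρABC)
        - qTsallis q (ptraceAB ρABC) - qTsallis q ρABC
      = ∑ c ∈ univ.filter (fun c => 0 < p c), p c ^ q *
          (qTsallis q (ρA c) + qTsallis q (ρB c) - qTsallis q (ρA c ⊗ₖ ρB c)) := by
  have hp : 0 ≤ p := hp0
  have hI := IsCQProductState.qTsallis_condMutualInfo_eq hρABC hp hρA hρB hρA1 hρB1 q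
  refine ⟨hI ▸ ?_, hI⟩
  calc ∑ c ∈ univ.filter (fun c => 0 < p c), p c ^ q *
          (qTsallis q (ρA c) + qTsallis q (ρB c) - qTsallis q (ρA c ⊗ₖ ρB c))
      ≤ ∑ c ∈ univ.filter (fun c => 0 < p c), p c ^ q * fBound q dA dB := by
        refine sum_le_sum fun c _ => mul_le_mul_of_nonneg_left ?_ (Real.rpow_nonneg (hp c) q)
        simpa using qTsallis_add_sub_kronecker_le (hρA c) (hρA1 c) (hρB c) (hρB1 c) hq
    _ = posRpowSum q p * fBound q dA dB := (sum_mul ..).symm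
    _ ≤ fBound q dA dB :=
        mul_le_of_le_one_left (fBound_nonneg hq dA dB) (posRpowSum_le_one hq.le hp hp1)
end

section
/- Let n, m ≥ 1 and let U be a complex matrix with rows indexed by pairs (a,b) ∈ Fin n × Fin m and columns indexed by Fin (n·m), satisfying U†U = I (U is unitary, identifying the index sets). Let d_C = n·m, define the unit vector τ indexed by triples (a,b,c) by τ_{(a,b,c)} = (1/√d_C)·U_{(a,b),c}, and let ρ = τ τ† be the corresponding rank-one density matrix (the normalised Choi state of the unitary channel). Then for every real q > 0 with q ≠ 1, the conditional quantum Tsallis mutual information of ρ between the first two subsystems given the third satisfies I_q(A:B|C) = S_q(ρ_{AC}) + S_q(ρ_{BC}) − S_q(ρ_C) − S_q(ρ) = f(q,n,m), where ρ_{AC}, ρ_{BC}, ρ_C are the partial traces of ρ. -/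
/-! The state `ρ = τ τ†` is pure, and each of `ρ_AC`, `ρ_BC`, `ρ_C`, `ρ` is a Gram matrix `W W†`
whose companion `W† W` is `k⁻¹ • 1` on a `k`-dimensional space (`k = m, n, nm, 1`
respectively), by unitarity of `U`. Then `A = W W†` has trace one and `A² = k⁻¹ A`, so its
spectrum is `k⁻¹` with multiplicity `k` plus zeros, and `S_q(A) = (k^{1-q} - 1)/(1 - q)`.
With `x = n^{1-q}`, `y = m^{1-q}` the claim reduces to `(y - 1) + (x - 1) - (xy - 1) =
-(1 - x)(1 - y)`. -/

open Finset Matrix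

lemma Matrix.IsHermitian.eigenvalues_eq_zero_or_eq_of_mul_self_eq_smul {ι : Type*} [Fintype ι]
    [DecidableEq ι] {A : Matrix ι ι ℂ} (hA : A.IsHermitian) {c : ℝ}
    (h : A * A = (c : ℂ) • A) (i : ι) : hA.eigenvalues i = 0 ∨ hA.eigenvalues i = c := by
  set v : ι → ℂ := ⇑(hA.eigenvectorBasis i)
  have hv : v ≠ 0 := (WithLp.ofLp_eq_zero 2).ne.2 <| hA.eigenvectorBasis.orthonormal.ne_zero i
  have hAv : A *ᵥ v = (hA.eigenvalues i : ℂ) • v := by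
    rw [hA.mulVec_eigenvectorBasis, RCLike.real_smul_eq_coe_smul (K := ℂ)]
    rfl
  have hquad : ((hA.eigenvalues i * hA.eigenvalues i : ℝ) : ℂ) • v
      = ((c * hA.eigenvalues i : ℝ) : ℂ) • v := by
    calc _ = A *ᵥ (A *ᵥ v) := by rw [hAv, mulVec_smul, hAv, smul_smul]; push_cast; rfl
      _ = (c : ℂ) • (A *ᵥ v) := by rw [mulVec_mulVec, h, smul_mulVec]
      _ = _ := by rw [hAv, smul_smul]; push_cast; rfl
  rcases eq_or_ne (hA.eigenvalues i) 0 with h0 | h0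
  · exact .inl h0
  · exact .inr <| mul_right_cancel₀ h0 <| Complex.ofReal_injective <| smul_left_injective ℂ hv hquad

lemma qTsallis_of_mul_self_eq_smul {ι : Type*} [Fintype ι] [DecidableEq ι] {A : Matrix ι ι ℂ}
    (hA : A.IsHermitian) {c : ℝ} (hc : 0 < c) (h : A * A = (c : ℂ) • A) (htr : A.trace = 1)
    (q : ℝ) : qTsallis q A = 1 / (1 - q) * (c ^ (q - 1) - 1) := by
  have hsum : ∑ i, hA.eigenvalues i = 1 := by
    have := hA.trace_eq_sum_eigenvalues (𝕜 := ℂ)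
    rw [htr, ← RCLike.ofReal_sum] at this
    exact RCLike.ofReal_injective (K := ℂ) (by simpa using this.symm)
  have hpow : ∀ i, (if 0 < hA.eigenvalues i then hA.eigenvalues i ^ q else 0)
      = c ^ (q - 1) * hA.eigenvalues i := by
    intro i
    rcases hA.eigenvalues_eq_zero_or_eq_of_mul_self_eq_smul h i with h0 | hci
    · simp [h0]
    · rw [hci, if_pos hc, ← Real.rpow_add_one hc.ne']
      ring_nf
  rw [qTsallis, dif_pos hA, sum_filter, Finset.sum_congr rfl fun i _ => hpow i, ← mul_sum, hsum,
    mul_one]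

lemma qTsallis_mul_conjTranspose_self {ι κ : Type*} [Fintype ι] [DecidableEq ι] [Fintype κ]
    [DecidableEq κ] [Nonempty κ] (W : Matrix ι κ ℂ) (hW : Wᴴ * W = (Fintype.card κ : ℂ)⁻¹ • 1)
    (q : ℝ) : qTsallis q (W * Wᴴ) = 1 / (1 - q) * ((Fintype.card κ : ℝ) ^ (1 - q) - 1) := by
  have hcard : (0 : ℝ) < Fintype.card κ := by exact_mod_cast Fintype.card_pos
  have hW' : Wᴴ * W = (((Fintype.card κ : ℝ)⁻¹ : ℝ) : ℂ) • 1 := by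
    rw [hW]
    push_cast
    rfl
  have hsq : W * Wᴴ * (W * Wᴴ) = (((Fintype.card κ : ℝ)⁻¹ : ℝ) : ℂ) • (W * Wᴴ) := by
    rw [Matrix.mul_assoc, ← Matrix.mul_assoc Wᴴ, hW', Matrix.smul_mul, Matrix.one_mul,
      Matrix.mul_smul]
  have htr : (W * Wᴴ).trace = 1 := by
    rw [trace_mul_comm, hW, trace_smul, trace_one, smul_eq_mul,
      inv_mul_cancel₀ (by exact_mod_cast hcard.ne')]
  rw [qTsallis_of_mul_self_eq_smul (isHermitian_mul_conjTranspose_self W) (inv_pos.2 hcard) hsq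
    htr, Real.inv_rpow hcard.le, ← Real.rpow_neg hcard.le, neg_sub]

lemma qTsallis_vecMulVec_star {ι : Type*} [Fintype ι] [DecidableEq ι] (v : ι → ℂ)
    (hv : ∑ i, star (v i) * v i = 1) (q : ℝ) : qTsallis q (vecMulVec v (star v)) = 0 := by
  have hgram : (replicateCol Unit v)ᴴ * replicateCol Unit v = (Fintype.card Unit : ℂ)⁻¹ • 1 := by
    ext
    simpa [mul_apply] using hv
  rw [vecMulVec_eq Unit, ← conjTranspose_replicateCol, qTsallis_mul_conjTranspose_self _ hgram]
  simp

def tripartiteVec {α β γ : Type*} (T : Matrix (α × β) γ ℂ) : α × β × γ → ℂ :=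
  fun x => T (x.1, x.2.1) x.2.2

section Tripartite

variable {α β γ : Type*} (T : Matrix (α × β) γ ℂ)

lemma ptraceB_vecMulVec_tripartiteVec [Fintype β] [Fintype γ] :
    ptraceB (vecMulVec (tripartiteVec T) (star (tripartiteVec T)))
      = of (fun (w : α × γ) b => T (w.1, b) w.2) * (of fun (w : α × γ) b => T (w.1, b) w.2)ᴴ := by
  ext
  simp [ptraceB, tripartiteVec, vecMulVec_apply, mul_apply]

lemma ptraceA_vecMulVec_tripartiteVec [Fintype α] [Fintype γ] :
    ptraceA (vecMulVec (tripartiteVec T) (star (tripartiteVec T)))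
      = of (fun (w : β × γ) a => T (a, w.1) w.2) * (of fun (w : β × γ) a => T (a, w.1) w.2)ᴴ := by
  ext
  simp [ptraceA, tripartiteVec, vecMulVec_apply, mul_apply]

lemma ptraceAB_vecMulVec_tripartiteVec [Fintype α] [Fintype β] :
    ptraceAB (vecMulVec (tripartiteVec T) (star (tripartiteVec T))) = Tᵀ * Tᵀᴴ := by
  ext
  simp [ptraceAB, tripartiteVec, vecMulVec_apply, mul_apply, Fintype.sum_prod_type]

variable [Fintype α] [Fintype β] [Fintype γ] [DecidableEq α] [DecidableEq β] [DecidableEq γ]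
  [Nonempty α] [Nonempty β] (q : ℝ)

lemma qTsallis_ptraceB_tripartiteVec
    (hT : T * Tᴴ = (Fintype.card (α × β) : ℂ)⁻¹ • 1) :
    qTsallis q (ptraceB (vecMulVec (tripartiteVec T) (star (tripartiteVec T))))
      = 1 / (1 - q) * ((Fintype.card β : ℝ) ^ (1 - q) - 1) := by
  set W : Matrix (α × γ) β ℂ := of fun w b => T (w.1, b) w.2
  have hgram : Wᴴ * W = (Fintype.card β : ℂ)⁻¹ • 1 := by
    ext b b'
    have hrow a := congrFun (congrFun hT (a, b')) (a, b)
    simp only [W, mul_apply, conjTranspose_apply, of_apply, Matrix.smul_apply, one_apply,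
      Fintype.sum_prod_type, smul_eq_mul] at hrow ⊢
    simp_rw [mul_comm (star _), hrow]
    by_cases h : b = b' <;> simp [h, eq_comm, mul_comm]
  rw [ptraceB_vecMulVec_tripartiteVec, qTsallis_mul_conjTranspose_self W hgram]

lemma qTsallis_ptraceA_tripartiteVec
    (hT : T * Tᴴ = (Fintype.card (α × β) : ℂ)⁻¹ • 1) :
    qTsallis q (ptraceA (vecMulVec (tripartiteVec T) (star (tripartiteVec T))))
      = 1 / (1 - q) * ((Fintype.card α : ℝ) ^ (1 - q) - 1) := by
  set W : Matrix (β × γ) α ℂ := of fun w a => T (a, w.1) w.2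
  have hgram : Wᴴ * W = (Fintype.card α : ℂ)⁻¹ • 1 := by
    ext a a'
    have hrow b := congrFun (congrFun hT (a', b)) (a, b)
    simp only [W, mul_apply, conjTranspose_apply, of_apply, Matrix.smul_apply, one_apply,
      Fintype.sum_prod_type, smul_eq_mul] at hrow ⊢
    simp_rw [mul_comm (star _), hrow]
    by_cases h : a = a' <;> simp [h, eq_comm]
  rw [ptraceA_vecMulVec_tripartiteVec, qTsallis_mul_conjTranspose_self W hgram]

lemma qTsallis_ptraceAB_tripartiteVec
    (hT : T * Tᴴ = (Fintype.card (α × β) : ℂ)⁻¹ • 1) :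
    qTsallis q (ptraceAB (vecMulVec (tripartiteVec T) (star (tripartiteVec T))))
      = 1 / (1 - q) * ((Fintype.card (α × β) : ℝ) ^ (1 - q) - 1) := by
  have hgram : Tᵀᴴ * Tᵀ = (Fintype.card (α × β) : ℂ)⁻¹ • 1 := by
    rw [conjTranspose_transpose_eq_transpose_conjTranspose, ← transpose_mul, hT]
    simp
  rw [ptraceAB_vecMulVec_tripartiteVec, qTsallis_mul_conjTranspose_self _ hgram]

lemma qTsallis_vecMulVec_tripartiteVec
    (hT : T * Tᴴ = (Fintype.card (α × β) : ℂ)⁻¹ • 1) :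
    qTsallis q (vecMulVec (tripartiteVec T) (star (tripartiteVec T))) = 0 := by
  refine qTsallis_vecMulVec_star _ ?_ q
  have htr := congrArg trace hT
  rw [trace_smul, trace_one, smul_eq_mul, inv_mul_cancel₀ (by exact_mod_cast Fintype.card_ne_zero)]
    at htr
  rw [← htr, Fintype.sum_prod_type]
  simp [tripartiteVec, trace, mul_apply, mul_comm, Fintype.sum_prod_type]

end Tripartite

theorem quantum_tsallis_cond_mutual_info_choi_unitary_general
    {n m : ℕ} (hn : 1 ≤ n) (hm : 1 ≤ m)
    (U : Matrix (Fin n × Fin m) (Fin (n * m)) ℂ)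
    (hU : Uᴴ * U = 1)
    (τ : Fin n × Fin m × Fin (n * m) → ℂ)
    (hτ : ∀ a b c, τ (a, b, c) = ((1 / Real.sqrt (n * m) : ℝ) : ℂ) * U (a, b) c)
    (ρ : Matrix (Fin n × Fin m × Fin (n * m)) (Fin n × Fin m × Fin (n * m)) ℂ)
    (hρ : ρ = Matrix.vecMulVec τ (star τ))
    (q : ℝ) :
    qTsallis q (ptraceB ρ) + qTsallis q (ptraceA ρ)
        - qTsallis q (ptraceAB ρ) - qTsallis q ρ
      = fBound q n m := by
  have : Nonempty (Fin n) := ⟨⟨0, hn⟩⟩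
  have : Nonempty (Fin m) := ⟨⟨0, hm⟩⟩
  set T := ((1 / Real.sqrt (n * m) : ℝ) : ℂ) • U
  have hτT : τ = tripartiteVec T := funext fun x => hτ x.1 x.2.1 x.2.2
  have hT : T * Tᴴ = (Fintype.card (Fin n × Fin m) : ℂ)⁻¹ • 1 := by
    have hUU : U * Uᴴ = 1 := (mul_eq_one_comm_of_equiv finProdFinEquiv.symm).mp hU
    rw [conjTranspose_smul, Matrix.smul_mul, Matrix.mul_smul, hUU, smul_smul, Complex.star_def,
      Complex.conj_ofReal, ← Complex.ofReal_mul, div_mul_div_comm, one_mul,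
      Real.mul_self_sqrt (by positivity)]
    simp
  subst hρ hτT
  rw [qTsallis_ptraceB_tripartiteVec T q hT, qTsallis_ptraceA_tripartiteVec T q hT,
    qTsallis_ptraceAB_tripartiteVec T q hT, qTsallis_vecMulVec_tripartiteVec T q hT, fBound,
    Fintype.card_prod, Fintype.card_fin, Fintype.card_fin, Nat.cast_mul,
    Real.mul_rpow (Nat.cast_nonneg n) (Nat.cast_nonneg m),
    show 1 / (1 - q) = -(1 / (q - 1)) by rw [← one_div_neg_eq_neg_one_div, neg_sub]]
  ring

/-- For the normalised Choi state `τ_{(a,b,c)} = (1/√(nm)) U_{(a,b),c}` of a unitary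
channel given by a unitary `U`, the conditional quantum Tsallis mutual information
between the first two subsystems given the third equals `f(q,n,m)` for every
`q > 0`, `q ≠ 1`. -/
theorem quantum_tsallis_cond_mutual_info_choi_unitary
    {n m : ℕ} (hn : 1 ≤ n) (hm : 1 ≤ m)
    (U : Matrix (Fin n × Fin m) (Fin (n * m)) ℂ)
    (hU : Uᴴ * U = 1)
    (τ : Fin n × Fin m × Fin (n * m) → ℂ)
    (hτ : ∀ a b c, τ (a, b, c) = ((1 / Real.sqrt (n * m) : ℝ) : ℂ) * U (a, b) c)
    (ρ : Matrix (Fin n × Fin m × Fin (n * m)) (Fin n × Fin m × Fin (n * m)) ℂ)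
    (hρ : ρ = Matrix.vecMulVec τ (star τ))
    (q : ℝ) (hq : 0 < q) (hq1 : q ≠ 1) :
    qTsallis q (ptraceB ρ) + qTsallis q (ptraceA ρ)
        - qTsallis q (ptraceAB ρ) - qTsallis q ρ
      = fBound q n m :=
  quantum_tsallis_cond_mutual_info_choi_unitary_general hn hm U hU τ hτ ρ hρ q
end
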